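/- Let R be a prime ring of characteristic different from 2, let ξ ∈ R, and let (D₁, d₁) and (D₂, d₂) be generalized derivations on R such that the pair (D₁² + D₁∘D₂, d₁² + d₁∘d₂) is a generalized derivation on R. If D₂ is the right multiplication map R_ξ : r ↦ rξ (so that d₂ is the inner derivation t ↦ tξ − ξt) and D₁ ≠ 0, then either D₁ = R_{−ξ} (with d₁ = −d₂), or ξ lies in the center Z(R) of R. -/

import Mathlib

/-! Write `δ t = tξ - ξt`. Expanding the product rule of `D₁² + D₁R_ξ` gives
`2 D₁x d₁y + D₁x δy + xξ d₁y = 0`; replacing `y` by `yz` and using `D₁x = D₁(1) x + d₁x` turns this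
into `d₁t y (d₁ + δ)z + (d₁ + δ)t y d₁z = 0`. In a prime ring of characteristic not `2` such a
symmetric identity forces `d₁ = 0` or `d₁ = -δ`. The first case makes `δ` vanish on `R`, since
`D₁ ≠ 0`; in the second, the same identities show `D₁(1) = -ξ`, i.e. `D₁ = R_{-ξ}`. -/

/-- An additive map `d : R → R` with `d (x*y) = d x * y + x * d y` is a derivation. -/
def IsDerivation {R : Type*} [Ring R] (d : R → R) : Prop :=
  (∀ x y, d (x + y) = d x + d y) ∧ (∀ x y, d (x * y) = d x * y + x * d y)

/-- A generalized derivation `(D, d)`: `D` additive, `d` a derivation, and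
`D (x*y) = D x * y + x * d y`. -/
def IsGenDerivation {R : Type*} [Ring R] (D d : R → R) : Prop :=
  (∀ x y, D (x + y) = D x + D y) ∧ IsDerivation d ∧ (∀ x y, D (x * y) = D x * y + x * d y)

section

variable {R : Type*} [Ring R]

theorem IsDerivation.map_sub {d : R → R} (hd : IsDerivation d) (x y : R) :
    d (x - y) = d x - d y := by
  rw [eq_sub_iff_add_eq, ← hd.1, sub_add_cancel]

namespace IsGenDerivation

variable {D d : R → R} {ξ : R}

theorem apply_eq_apply_one_mul_add (hD : IsGenDerivation D d) (x : R) : D x = D 1 * x + d x := by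
  simpa only [one_mul] using hD.2.2 1 x

section SqAddCompMulRight

variable (hD : IsGenDerivation D d)
  (hsq : IsGenDerivation (fun x => D (D x) + D (x * ξ)) (fun x => d (d x) + d (x * ξ - ξ * x)))
include hD hsq

theorem two_mul_add_eq_zero_of_sq_add_comp_mul_right (x y : R) :
    2 * (D x * d y) + D x * (y * ξ - ξ * y) + x * ξ * d y = 0 := by
  obtain ⟨hDadd, hd, hDmul⟩ := hD
  have hprod := hsq.2.2 x y
  simp only [hDmul, hDadd, hd.map_sub, hd.2] at hprod
  linear_combination (norm := noncomm_ring) hprod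

theorem two_mul_add_eq_zero_of_sq_add_comp_mul_right' (x y z : R) :
    2 * (D x * (y * d z)) + D x * (y * (z * ξ - ξ * z)) + x * ξ * (y * d z) = 0 := by
  have hyz := two_mul_add_eq_zero_of_sq_add_comp_mul_right hD hsq x (y * z)
  have hy := two_mul_add_eq_zero_of_sq_add_comp_mul_right hD hsq x y
  rw [hD.2.1.2 y z] at hyz
  linear_combination (norm := noncomm_ring) hyz - hy * z

theorem mul_mul_add_mul_mul_eq_zero_of_sq_add_comp_mul_right (t y z : R) :
    d t * y * (d z + (z * ξ - ξ * z)) + (d t + (t * ξ - ξ * t)) * y * d z = 0 := by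
  have ht := two_mul_add_eq_zero_of_sq_add_comp_mul_right' hD hsq t y z
  have h1 := two_mul_add_eq_zero_of_sq_add_comp_mul_right' hD hsq 1 (t * y) z
  rw [hD.apply_eq_apply_one_mul_add t] at ht
  linear_combination (norm := noncomm_ring) ht - h1

theorem apply_one_mul_mul_add_eq_zero_of_sq_add_comp_mul_right (y z : R) :
    (D 1 + ξ) * y * d z + D 1 * y * (d z + (z * ξ - ξ * z)) = 0 := by
  linear_combination (norm := noncomm_ring)
    two_mul_add_eq_zero_of_sq_add_comp_mul_right' hD hsq 1 y z

theorem mem_center_of_sq_add_comp_mul_right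
    (hprime : ∀ x y : R, (∀ r : R, x * r * y = 0) → x = 0 ∨ y = 0)
    (hDne : D ≠ 0) (hd : d = 0) : ξ ∈ Set.center R := by
  obtain ⟨x, hx⟩ := Function.ne_iff.mp hDne
  refine Semigroup.mem_center_iff.mpr fun z => sub_eq_zero.mp ?_
  refine (hprime (D x) _ fun y => ?_).resolve_left hx
  simpa only [hd, Pi.zero_apply, mul_zero, add_zero, zero_add, ← mul_assoc] using
    two_mul_add_eq_zero_of_sq_add_comp_mul_right' hD hsq x y z

end SqAddCompMulRight

end IsGenDerivation

theorem eq_zero_or_eq_zero_of_mul_mul_add_mul_mul_eq_zero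
    (hprime : ∀ x y : R, (∀ r : R, x * r * y = 0) → x = 0 ∨ y = 0)
    (hchar : ∀ x : R, 2 * x = 0 → x = 0) {f g : R → R}
    (hfg : ∀ t y z, f t * y * g z + g t * y * f z = 0) : f = 0 ∨ g = 0 := by
  by_contra! hne
  obtain ⟨t, ht⟩ := Function.ne_iff.mp hne.2
  refine hne.1 (funext fun z => ((hprime (g t) (f z) fun y => hchar _ ?_).resolve_left ht))
  -- `hfg` makes `R g t` annihilate `f t y g z - g t y f z` from the right; `hfg t y z` minus this
  -- difference is `2 g t y f z`
  have hanti : f t * y * g z - g t * y * f z = 0 := by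
    refine (hprime _ (g t) fun y' => ?_).resolve_right ht
    linear_combination (norm := noncomm_ring)
      hfg t (y * g z * y') t - g t * y * hfg z y' t
  linear_combination (norm := noncomm_ring) hfg t y z - hanti

end

theorem stmt16_general {R : Type*} [Ring R]
    (hprime : ∀ x y : R, (∀ r : R, x * r * y = 0) → x = 0 ∨ y = 0)
    (hchar : ∀ x : R, 2 * x = 0 → x = 0)
    (ξ : R) (D₁ d₁ D₂ d₂ : R → R)
    (h₁ : IsGenDerivation D₁ d₁)
    (h : IsGenDerivation (fun x => D₁ (D₁ x) + D₁ (D₂ x)) (fun x => d₁ (d₁ x) + d₁ (d₂ x)))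
    (hD₂ : D₂ = fun r => r * ξ) (hd₂ : d₂ = fun t => t * ξ - ξ * t)
    (hD₁ne : D₁ ≠ 0) :
    ((D₁ = fun r => r * (-ξ)) ∧ d₁ = -d₂) ∨ ξ ∈ Set.center R := by
  subst hD₂ hd₂
  by_cases hd₁ : d₁ = 0
  · exact Or.inr (h₁.mem_center_of_sq_add_comp_mul_right h hprime hD₁ne hd₁)
  have hsum : ∀ t, d₁ t + (t * ξ - ξ * t) = 0 := congrFun <|
    (eq_zero_or_eq_zero_of_mul_mul_add_mul_mul_eq_zero hprime hchar
      (h₁.mul_mul_add_mul_mul_eq_zero_of_sq_add_comp_mul_right h)).resolve_left hd₁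
  obtain ⟨z, hz⟩ := Function.ne_iff.mp hd₁
  have hone : D₁ 1 + ξ = 0 := by
    refine (hprime _ (d₁ z) fun y => ?_).resolve_right hz
    simpa only [hsum, mul_zero, add_zero] using
      h₁.apply_one_mul_mul_add_eq_zero_of_sq_add_comp_mul_right h y z
  refine Or.inl ⟨funext fun r => ?_, funext fun t => ?_⟩
  · rw [h₁.apply_eq_apply_one_mul_add r]
    linear_combination (norm := noncomm_ring) hsum r + hone * r
  · rw [Pi.neg_apply]
    linear_combination (norm := noncomm_ring) hsum t

theorem stmt16 {R : Type*} [Ring R]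
    (hprime : ∀ x y : R, (∀ r : R, x * r * y = 0) → x = 0 ∨ y = 0)
    (hchar : ∀ x : R, 2 * x = 0 → x = 0)
    (ξ : R) (D₁ d₁ D₂ d₂ : R → R)
    (h₁ : IsGenDerivation D₁ d₁) (h₂ : IsGenDerivation D₂ d₂)
    (h : IsGenDerivation (fun x => D₁ (D₁ x) + D₁ (D₂ x)) (fun x => d₁ (d₁ x) + d₁ (d₂ x)))
    (hD₂ : D₂ = fun r => r * ξ) (hd₂ : d₂ = fun t => t * ξ - ξ * t)
    (hD₁ne : D₁ ≠ 0) :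
    ((D₁ = fun r => r * (-ξ)) ∧ d₁ = -d₂) ∨ ξ ∈ Set.center R :=
  stmt16_general hprime hchar ξ D₁ d₁ D₂ d₂ h₁ h hD₂ hd₂ hD₁ne
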